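/- Let p ∈ ℕ, let Γ = {0,1}^p, let π : Γ → (0,∞), let S : Γ → (0,∞), let v ∈ [0,∞)^p, let f, g : [0,∞) → (0,1], and let w_A, w_R : {0,…,p} → [0,1]. Fix i* and γ ∈ Γ with γ_{i*} = 0, set γ′ = tog(i*, γ), and assume w_A(|γ|) > 0 and w_R(|γ′|) > 0. Define forward add-move inclusion probabilities ω_j = (1 − γ_j) f(v_j) and backward remove-move inclusion probabilities ω̃_j = γ′_j g(v_j), for j ∈ {1,…,p}. For η with η_{i*} = 1 put T(γ, γ′; η) = S(γ′)/Σ_{j : η_j = 1} S(tog(j, γ)), and analogously T(γ′, γ; η′) = S(γ)/Σ_{j : η′_j = 1} S(tog(j, γ′)). Define the add-move transition probability A_A(γ, γ′) = w_A(|γ|) · Σ over (η, η′) with η_{i*} = η′_{i*} = 1 of [∏_{j≠i*} ω_j^{η_j}(1−ω_j)^{1−η_j} ω̃_j^{η′_j}(1−ω̃_j)^{1−η′_j}] · ω_{i*} · T(γ, γ′; η) · min{1, π(γ′) w_R(|γ′|) ω̃_{i*} T(γ′, γ; η′)/(π(γ) w_A(|γ|) ω_{i*} T(γ, γ′; η))},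 and the remove-move transition probability A_R(γ′, γ) symmetrically (forward from γ′ uses the ω̃_j and weight w_R(|γ′|), backward toward γ uses the ω_j and weight w_A(|γ|)). Then π(γ) A_A(γ, γ′) = π(γ′) A_R(γ′, γ). -/
import Mathlib


/-- The toggle function: flip the `i`-th coordinate of `γ`. -/
def tog {p : ℕ} (i : Fin p) (γ : Fin p → Bool) : Fin p → Bool :=
  Function.update γ i (!(γ i))

/-- The size `|γ|` of an inclusion vector: the number of active coordinates. -/
def gsize {p : ℕ} (γ : Fin p → Bool) : ℕ :=
  (Finset.univ.filter fun i => γ i = true).card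

/-- Bernoulli factor `q^b (1-q)^{1-b}` for `b ∈ {0,1}`. -/
def bern (q : ℝ) (b : Bool) : ℝ := if b then q else 1 - q

/-- Selection probability `T(γ, γ′; η) = S(γ′)/Σ_{j : η_j = 1} S(tog(j, γ))`. -/
noncomputable def Tsel {p : ℕ} (S : (Fin p → Bool) → ℝ)
    (γ γ' : Fin p → Bool) (η : Fin p → Bool) : ℝ :=
  S γ' / ∑ j ∈ Finset.univ.filter (fun j => η j = true), S (tog j γ)

/-- Forward add-move inclusion probabilities `ω_j = (1 − γ_j) f(v_j)`. -/
noncomputable def ωAdd {p : ℕ} (f : ℝ → ℝ) (v : Fin p → ℝ) (γ : Fin p → Bool)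
    (j : Fin p) : ℝ :=
  if γ j then 0 else f (v j)

/-- Backward remove-move inclusion probabilities `ω̃_j = γ′_j g(v_j)`. -/
noncomputable def ωRem {p : ℕ} (g : ℝ → ℝ) (v : Fin p → ℝ) (γ' : Fin p → Bool)
    (j : Fin p) : ℝ :=
  if γ' j then g (v j) else 0

/-- The pMTM add-move transition probability `A_A(γ, γ′)` for `γ′ = tog(i*, γ)`,
`γ_{i*} = 0`. -/
noncomputable def Aadd {p : ℕ} (pr S : (Fin p → Bool) → ℝ) (wA wR : ℕ → ℝ)
    (f g : ℝ → ℝ) (v : Fin p → ℝ) (i : Fin p) (γ : Fin p → Bool) : ℝ :=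
  let γ' := tog i γ
  wA (gsize γ) *
    ∑ η : Fin p → Bool, ∑ η' : Fin p → Bool,
      if η i = true ∧ η' i = true then
        (∏ j ∈ Finset.univ.erase i,
          bern (ωAdd f v γ j) (η j) * bern (ωRem g v γ' j) (η' j)) *
        (ωAdd f v γ i * Tsel S γ γ' η *
          min 1 (pr γ' * (wR (gsize γ') * ωRem g v γ' i * Tsel S γ' γ η') /
                 (pr γ * (wA (gsize γ) * ωAdd f v γ i * Tsel S γ γ' η))))
      else 0

/-- The paired pMTM remove-move transition probability `A_R(γ′, γ)` back from
`γ′ = tog(i*, γ)` to `γ`: the forward set from `γ′` uses the remove probabilities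
`ω̃_j` and weight `w_R(|γ′|)`, the backward set toward `γ` uses the add
probabilities `ω_j` and weight `w_A(|γ|)`. -/
noncomputable def Arem {p : ℕ} (pr S : (Fin p → Bool) → ℝ) (wA wR : ℕ → ℝ)
    (f g : ℝ → ℝ) (v : Fin p → ℝ) (i : Fin p) (γ : Fin p → Bool) : ℝ :=
  let γ' := tog i γ
  wR (gsize γ') *
    ∑ η : Fin p → Bool, ∑ η' : Fin p → Bool,
      if η i = true ∧ η' i = true then
        (∏ j ∈ Finset.univ.erase i,
          bern (ωAdd f v γ j) (η j) * bern (ωRem g v γ' j) (η' j)) *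
        (ωRem g v γ' i * Tsel S γ' γ η' *
          min 1 (pr γ * (wA (gsize γ) * ωAdd f v γ i * Tsel S γ γ' η) /
                 (pr γ' * (wR (gsize γ') * ωRem g v γ' i * Tsel S γ' γ η'))))
      else 0


lemma min_balance {a b : ℝ} (ha : 0 < a) (hb : 0 < b) :
    a * min 1 (b / a) = b * min 1 (a / b) := by
  rw [mul_min_of_nonneg _ _ ha.le, mul_min_of_nonneg _ _ hb.le,
    mul_one, mul_one, mul_div_cancel₀ _ ha.ne', mul_div_cancel₀ _ hb.ne', min_comm]

lemma Tsel_pos {p : ℕ} (S : (Fin p → Bool) → ℝ) (hS : ∀ γ, 0 < S γ)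
    (γ γ' : Fin p → Bool) (η : Fin p → Bool) (i : Fin p) (hη : η i = true) :
    0 < Tsel S γ γ' η := by
  apply div_pos (hS _)
  apply Finset.sum_pos (fun j _ => hS _)
  exact ⟨i, by simp [hη]⟩

/-- Theorem 3.1 (add/remove case): the pMTM sampler satisfies detailed balance for
paired add and remove moves: `π(γ) A_A(γ, γ′) = π(γ′) A_R(γ′, γ)`. -/
theorem pMTM_add_remove_detailed_balance {p : ℕ} (pr S : (Fin p → Bool) → ℝ)
    (hpr : ∀ γ, 0 < pr γ) (hS : ∀ γ, 0 < S γ)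
    (v : Fin p → ℝ) (hv : ∀ j, 0 ≤ v j)
    (f g : ℝ → ℝ) (hf : ∀ x, 0 ≤ x → 0 < f x ∧ f x ≤ 1)
    (hg : ∀ x, 0 ≤ x → 0 < g x ∧ g x ≤ 1)
    (wA wR : ℕ → ℝ) (hwA : ∀ k, 0 ≤ wA k ∧ wA k ≤ 1) (hwR : ∀ k, 0 ≤ wR k ∧ wR k ≤ 1)
    (i : Fin p) (γ : Fin p → Bool) (hi : γ i = false)
    (hwApos : 0 < wA (gsize γ)) (hwRpos : 0 < wR (gsize (tog i γ))) :
    pr γ * Aadd pr S wA wR f g v i γ = pr (tog i γ) * Arem pr S wA wR f g v i γ := by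
  simp only [Aadd, Arem]
  rw [← mul_assoc, ← mul_assoc, Finset.mul_sum, Finset.mul_sum]
  refine Finset.sum_congr rfl fun η _ => ?_
  rw [Finset.mul_sum, Finset.mul_sum]
  refine Finset.sum_congr rfl fun η' _ => ?_
  by_cases h : η i = true ∧ η' i = true
  · rw [if_pos h, if_pos h]
    have hγ'i : tog i γ i = true := by simp [tog, hi]
    have hωA : 0 < ωAdd f v γ i := by
      simpa [ωAdd, hi] using (hf _ (hv i)).1
    have hωR : 0 < ωRem g v (tog i γ) i := by
      simpa [ωRem, hγ'i] using (hg _ (hv i)).1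
    have hT : 0 < Tsel S γ (tog i γ) η := Tsel_pos S hS _ _ _ i h.1
    have hT' : 0 < Tsel S (tog i γ) γ η' := Tsel_pos S hS _ _ _ i h.2
    have hA : 0 < pr γ * (wA (gsize γ) * ωAdd f v γ i * Tsel S γ (tog i γ) η) := by
      have := hpr γ; positivity
    have hB : 0 < pr (tog i γ) *
        (wR (gsize (tog i γ)) * ωRem g v (tog i γ) i * Tsel S (tog i γ) γ η') := by
      have := hpr (tog i γ); positivity
    have key := min_balance hA hB
    linear_combination (∏ j ∈ Finset.univ.erase i,
      bern (ωAdd f v γ j) (η j) * bern (ωRem g v (tog i γ) j) (η' j)) * key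
  · rw [if_neg h, if_neg h, mul_zero, mul_zero]
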